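/- There exist a constant C > 0 and an integer N₀ such that for every integer N ≥ N₀ and all real numbers α, β with 0 ≤ α ≤ 20 and 0 ≤ β ≤ 20, one has ∂L_N/∂γ (α, β, 3/2) ≥ 1/(2N) − C/N² > 0. In particular, under gradient flow the parameter γ is strictly decreasing whenever γ = 3/2 and α, β lie in this range, so γ can never exceed 3/2 in this regime. -/

import Mathlib

/-!
At `γ = 3/2` the derivative `∂L_N/∂γ = 3(s² + 2N − 1)/r² − 2s/r` equals `1/(2N)` when
`s = 1`, and for `s ≥ 1` it falls short of `1/(2N)` by at most `(s − 1)/N`. For `α, β ∈ [0, 20]`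
the exponent of `s` is at most `20 e²⁰ / N`, so `s − 1 = O(1/N)` and the defect is `O(1/N²)`.
-/

noncomputable section

/-- `s = exp(β·e^α / (e^α + 2N − 2))`. -/
def sFun (N : ℕ) (α β : ℝ) : ℝ :=
  Real.exp (β * Real.exp α / (Real.exp α + 2 * (N : ℝ) - 2))

/-- `r = s + 2N − 1`. -/
def rFun (N : ℕ) (α β : ℝ) : ℝ := sFun N α β + 2 * (N : ℝ) - 1

/-- The loss `L_N(α, β, γ) = γ²·(s² + 2N − 1)/r² − 2γ·s/r + 1`. -/
def Lfun (N : ℕ) (α β γ : ℝ) : ℝ :=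
  γ ^ 2 * ((sFun N α β) ^ 2 + (2 * (N : ℝ) - 1)) / (rFun N α β) ^ 2 -
    2 * γ * sFun N α β / rFun N α β + 1

/-- The partial derivative `∂L_N/∂α`. -/
def dLalpha (N : ℕ) (α β γ : ℝ) : ℝ := deriv (fun x => Lfun N x β γ) α

/-- The partial derivative `∂L_N/∂β`. -/
def dLbeta (N : ℕ) (α β γ : ℝ) : ℝ := deriv (fun x => Lfun N α x γ) β

/-- The partial derivative `∂L_N/∂γ`. -/
def dLgamma (N : ℕ) (α β γ : ℝ) : ℝ := deriv (fun x => Lfun N α β x) γ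

open Real

theorem hasDerivAt_Lfun_gamma (N : ℕ) (α β γ : ℝ) :
    HasDerivAt (fun x => Lfun N α β x)
      (2 * γ * (sFun N α β ^ 2 + (2 * (N : ℝ) - 1)) / rFun N α β ^ 2 -
        2 * sFun N α β / rFun N α β) γ := by
  have hsq := ((hasDerivAt_pow 2 γ).mul_const (sFun N α β ^ 2 + (2 * (N : ℝ) - 1))).div_const
    (rFun N α β ^ 2)
  have hlin := (((hasDerivAt_id γ).const_mul (2 : ℝ)).mul_const (sFun N α β)).div_const
    (rFun N α β)
  refine ((hsq.sub hlin).add_const 1).congr_deriv ?_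
  norm_num

theorem dLgamma_eq (N : ℕ) (α β γ : ℝ) :
    dLgamma N α β γ = 2 * γ * (sFun N α β ^ 2 + (2 * (N : ℝ) - 1)) / rFun N α β ^ 2 -
      2 * sFun N α β / rFun N α β :=
  (hasDerivAt_Lfun_gamma N α β γ).deriv

theorem sub_div_le_three_halves_gradient {n s : ℝ} (hn : 1 ≤ n) (hs : 1 ≤ s) :
    1 / (2 * n) - (s - 1) / n ≤
      2 * (3 / 2) * (s ^ 2 + (2 * n - 1)) / (s + 2 * n - 1) ^ 2 - 2 * s / (s + 2 * n - 1) := by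
  have hr : 0 < s + 2 * n - 1 := by linarith
  have hdiff : 2 * (3 / 2) * (s ^ 2 + (2 * n - 1)) / (s + 2 * n - 1) ^ 2 -
      2 * s / (s + 2 * n - 1) - (1 / (2 * n) - (s - 1) / n) =
      (s - 1) * (2 * (s + 2 * n - 1) ^ 2 - (2 * n - 1) * (4 * n + 1 - s)) /
        (2 * n * (s + 2 * n - 1) ^ 2) := by
    field_simp
    ring
  have hnonneg : 0 ≤ (s - 1) * (2 * (s + 2 * n - 1) ^ 2 - (2 * n - 1) * (4 * n + 1 - s)) /
      (2 * n * (s + 2 * n - 1) ^ 2) := by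
    apply div_nonneg _ (by positivity)
    exact mul_nonneg (by linarith) (by nlinarith)
  linarith

section Exponent

variable {N : ℕ} {α β : ℝ}

theorem sFun_exponent_mem (hN : 1 ≤ (N : ℝ)) (hα : 0 ≤ α) (hβ : 0 ≤ β) :
    0 ≤ β * exp α / (exp α + 2 * N - 2) ∧
      β * exp α / (exp α + 2 * N - 2) ≤ β * exp α / N := by
  have hexp : 1 ≤ exp α := one_le_exp hα
  have hnum : 0 ≤ β * exp α := by positivity
  exact ⟨div_nonneg hnum (by linarith),
    div_le_div_of_nonneg_left hnum (by linarith) (by linarith)⟩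

theorem one_le_sFun (hN : 1 ≤ (N : ℝ)) (hα : 0 ≤ α) (hβ : 0 ≤ β) : 1 ≤ sFun N α β :=
  one_le_exp (sFun_exponent_mem hN hα hβ).1

theorem sFun_sub_one_le (hN : 1 ≤ (N : ℝ)) (hα : 0 ≤ α) (hβ : 0 ≤ β)
    (hsmall : β * exp α ≤ N) : sFun N α β - 1 ≤ 2 * (β * exp α) / N := by
  obtain ⟨hx₀, hx⟩ := sFun_exponent_mem hN hα hβ
  have hx₁ : β * exp α / (exp α + 2 * N - 2) ≤ 1 :=
    hx.trans ((div_le_one (by linarith)).2 hsmall)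
  have hbound := abs_exp_sub_one_le (x := β * exp α / (exp α + 2 * N - 2))
    (by rwa [abs_of_nonneg hx₀])
  rw [abs_of_nonneg hx₀, abs_le] at hbound
  rw [mul_div_assoc]
  exact hbound.2.trans (by linarith)

end Exponent

/-- For all sufficiently large `N` and all `0 ≤ α ≤ 20`, `0 ≤ β ≤ 20`,
`∂L_N/∂γ (α, β, 3/2) ≥ 1/(2N) − C/N² > 0`: under gradient flow, `γ` is strictly
decreasing whenever `γ = 3/2` in this range, so `γ` can never exceed `3/2`. -/
theorem stmt15 :
    ∃ C : ℝ, 0 < C ∧ ∃ N₀ : ℕ, ∀ N : ℕ, N₀ ≤ N → ∀ α β : ℝ,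
      0 ≤ α → α ≤ 20 → 0 ≤ β → β ≤ 20 →
        1 / (2 * (N : ℝ)) - C / (N : ℝ) ^ 2 ≤ dLgamma N α β (3 / 2) ∧
          0 < 1 / (2 * (N : ℝ)) - C / (N : ℝ) ^ 2 := by
  set C : ℝ := 40 * exp 20
  refine ⟨C, by positivity, ⌈2 * C⌉₊ + 1, fun N hN α β hα hα' hβ hβ' => ?_⟩
  have hNC : 2 * C < N := Nat.lt_of_ceil_lt (Nat.lt_of_succ_le hN)
  have hN1 : 1 ≤ (N : ℝ) := by exact_mod_cast (Nat.le_add_left 1 _).trans hN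
  have hNpos : 0 < (N : ℝ) := by linarith
  have hβexp : β * exp α ≤ 20 * exp 20 :=
    mul_le_mul hβ' (exp_le_exp.2 hα') (exp_pos α).le (by norm_num)
  have hs : (sFun N α β - 1) * N ≤ 2 * (β * exp α) :=
    (le_div_iff₀ hNpos).1 (sFun_sub_one_le hN1 hα hβ (by linarith))
  have hdefect : (sFun N α β - 1) / N ≤ C / (N : ℝ) ^ 2 := by
    rw [div_le_div_iff₀ hNpos (by positivity)]
    nlinarith [mul_le_mul_of_nonneg_right hs hNpos.le]
  constructor
  · rw [dLgamma_eq, rFun]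
    linarith [sub_div_le_three_halves_gradient hN1 (one_le_sFun hN1 hα hβ)]
  · rw [sub_pos, div_lt_div_iff₀ (by positivity) (by positivity)]
    nlinarith
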